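/- arXiv:math/0503738 — 7 statements merged into one kernel-verified Lean document; each statement's English description precedes it below -/
import Mathlib

section
/- Let n ≥ 1 and l ∈ {1,…,n}. For every k ∈ {0,…,l−1}: (1/n) · Σ_{m=1}^{n} [C(l−1,k)·C(n−l, m−1−k) / C(n−1, m−1)] = 1/l. Equivalently, if N is uniform on {1,…,n} and, conditionally on N = m, G has distribution HypGeo(n−1; l−1, m−1), then G is uniformly distributed on {0,…,l−1}. -/
open MeasureTheory ProbabilityTheory Finset Filter
open scoped ENNReal NNReal

noncomputable section

/-- The `k`-th harmonic number `H_k = ∑_{i=1}^k 1/i`, with `H_0 = 0`. -/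
def harm (k : ℕ) : ℝ := ∑ i ∈ Finset.range k, (1 : ℝ) / (i + 1)

instance (n : ℕ) : MeasurableSpace (Equiv.Perm (Fin n)) := ⊤

/-- The uniform distribution on the permutations of `{1,…,n}`. -/
def uniformPerm (n : ℕ) : Measure (Equiv.Perm (Fin n)) :=
  (PMF.uniformOfFintype (Equiv.Perm (Fin n))).toMeasure

/-- The (1-based) position `N = π⁻¹(l)` of the key `l` in the permutation `π`
(positions are `i+1` for `i : Fin n`, values are `π i + 1`). -/
def bstN (n l : ℕ) (π : Equiv.Perm (Fin n)) : ℕ :=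
  1 + ∑ i : Fin n, if (π i : ℕ) + 1 = l then (i : ℕ) else 0

open scoped Classical in
/-- `R₋`: the number of ascending records in the subpermutation of values `< l`
appearing before the position of `l`. -/
def bstRminus (n l : ℕ) (π : Equiv.Perm (Fin n)) : ℕ :=
  (Finset.univ.filter fun r : Fin n =>
    (r : ℕ) + 1 < bstN n l π ∧ (π r : ℕ) + 1 < l ∧
      ∀ k : Fin n, k < r → (π k : ℕ) + 1 < l → π k < π r).card

open scoped Classical in
/-- `R₊`: the number of descending records in the subpermutation of values `> l`
appearing before the position of `l`. -/
def bstRplus (n l : ℕ) (π : Equiv.Perm (Fin n)) : ℕ :=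
  (Finset.univ.filter fun r : Fin n =>
    (r : ℕ) + 1 < bstN n l π ∧ (π r : ℕ) + 1 > l ∧
      ∀ k : Fin n, k < r → (π k : ℕ) + 1 > l → π r < π k).card

/-- `X_{n,l} = R₋ + R₊`: the depth of the node containing `l` in the binary search
tree built from the permutation `π` of `{1,…,n}`. -/
def bstDepth (n l : ℕ) (π : Equiv.Perm (Fin n)) : ℕ :=
  bstRminus n l π + bstRplus n l π

open scoped Classical in
/-- `G = #{1 ≤ i < N : π(i) < l}`. -/
def bstG (n l : ℕ) (π : Equiv.Perm (Fin n)) : ℕ :=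
  (Finset.univ.filter fun i : Fin n =>
    (i : ℕ) + 1 < bstN n l π ∧ (π i : ℕ) + 1 < l).card

/-- The expectation `E X_{n,l}` of the depth of the node containing `l`. -/
def bstExp (n l : ℕ) : ℝ := ∫ π, (bstDepth n l π : ℝ) ∂(uniformPerm n)

/-- The hypergeometric probability mass function: for `X ~ HypGeo(N; M, n)`,
`P(X = k) = C(M,k)·C(N−M,n−k)/C(N,n)` for `0 ≤ k ≤ n` (and `0` otherwise). -/
def hypPMF (N M n k : ℕ) : ℝ :=
  if k ≤ n then (M.choose k * (N - M).choose (n - k) : ℝ) / (N.choose n) else 0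

/-- Total variation distance between (probability) measures on `ℕ`. -/
def dTV (μ ν : Measure ℕ) : ℝ := ⨆ A : Set ℕ, |(μ A).toReal - (ν A).toReal|

/-- The Wasserstein-type distance `d_W` of Barbour–Holst–Janson: the supremum of
`|∫ f dμ − ∫ f dν|` over measurable `f` with `|f(x) − f(y)| ≤ 1` whenever `|x − y| ≤ 1`. -/
def dW (μ ν : Measure ℝ) : ℝ :=
  sSup { d : ℝ | ∃ f : ℝ → ℝ, Measurable f ∧ (∀ x y, |x - y| ≤ 1 → |f x - f y| ≤ 1) ∧
    d = |∫ x, f x ∂μ - ∫ x, f x ∂ν| }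

/-- The mixed Poisson distribution with mixing measure `ν`:
`MixPo(ν)({k}) = ∫ e^{−λ} λ^k / k! ν(dλ)`. -/
def mixPo (ν : Measure ℝ) : Measure ℕ :=
  Measure.sum fun k =>
    (∫⁻ l, ENNReal.ofReal (Real.exp (-l) * l ^ k / k.factorial) ∂ν) • Measure.dirac k

/-- The standard normal cumulative distribution function `Φ`. -/
def stdNormalCDF (x : ℝ) : ℝ :=
  (1 / Real.sqrt (2 * Real.pi)) * ∫ y in Set.Iic x, Real.exp (-y ^ 2 / 2)

end

lemma sum_range_choose_k (m k : ℕ) :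
    ∑ j ∈ Finset.range (m + 1), j.choose k = (m + 1).choose (k + 1) := by
  rw [← Nat.sum_Icc_choose m k]
  apply (Finset.sum_subset ?_ ?_).symm
  · intro j hj
    simp only [Finset.mem_Icc] at hj
    simp only [Finset.mem_range]; omega
  · intro j hj hj'
    simp only [Finset.mem_Icc, Finset.mem_range, not_and, not_le] at hj hj'
    exact Nat.choose_eq_zero_of_lt (by omega)

lemma vandermonde_upper (k : ℕ) : ∀ m r : ℕ,
    ∑ j ∈ Finset.range (m + 1), j.choose k * (m - j).choose r
      = (m + 1).choose (k + r + 1) := by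
  intro m
  induction m with
  | zero =>
    intro r
    cases k with
    | zero => cases r with
      | zero => simp
      | succ r => simp [Nat.choose_eq_zero_of_lt]
    | succ k => simp [Nat.choose_eq_zero_of_lt (show 1 < k + 1 + r + 1 by omega)]
  | succ m ih =>
    intro r
    cases r with
    | zero =>
      simp only [Nat.choose_zero_right, mul_one]
      rw [sum_range_choose_k]
    | succ r =>
      rw [Finset.sum_range_succ]
      have h0 : (m + 1 - (m + 1)).choose (r + 1) = 0 := by
        simp
      rw [h0, mul_zero, add_zero]
      have : ∀ j ∈ Finset.range (m + 1),
          j.choose k * (m + 1 - j).choose (r + 1)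
            = j.choose k * (m - j).choose (r + 1) + j.choose k * (m - j).choose r := by
        intro j hj
        simp only [Finset.mem_range] at hj
        have : m + 1 - j = (m - j) + 1 := by omega
        rw [this, Nat.choose_succ_succ, Nat.mul_add]
        simp [Nat.succ_eq_add_one]
        ring
      rw [Finset.sum_congr rfl this, Finset.sum_add_distrib, ih (r + 1), ih r]
      have : k + (r + 1) + 1 = (k + r + 1) + 1 := by ring
      rw [this, Nat.choose_succ_succ (m + 1) (k + r + 1)]
      simp [Nat.succ_eq_add_one]
      omega

lemma hyp_term_swap (a b j k : ℕ) (hab : a ≤ b) (hjb : j ≤ b) (hka : k ≤ a) (hkj : k ≤ j) :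
    (a.choose k * (b - a).choose (j - k) : ℝ) / (b.choose j)
      = (j.choose k * (b - j).choose (a - k) : ℝ) / (b.choose a) := by
  by_cases h : j - k ≤ b - a
  · have h2 : a - k ≤ b - j := by omega
    have e : b - a - (j - k) = b - j - (a - k) := by omega
    rw [Nat.cast_choose ℝ hka, Nat.cast_choose ℝ h, Nat.cast_choose ℝ hjb,
      Nat.cast_choose ℝ hkj, Nat.cast_choose ℝ h2, Nat.cast_choose ℝ hab, e]
    have f1 : ((k).factorial : ℝ) ≠ 0 := Nat.cast_ne_zero.mpr (Nat.factorial_ne_zero _)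
    have f2 : ((a - k).factorial : ℝ) ≠ 0 := Nat.cast_ne_zero.mpr (Nat.factorial_ne_zero _)
    have f3 : ((j - k).factorial : ℝ) ≠ 0 := Nat.cast_ne_zero.mpr (Nat.factorial_ne_zero _)
    have f4 : ((b - j - (a - k)).factorial : ℝ) ≠ 0 := Nat.cast_ne_zero.mpr (Nat.factorial_ne_zero _)
    have f5 : ((b - j).factorial : ℝ) ≠ 0 := Nat.cast_ne_zero.mpr (Nat.factorial_ne_zero _)
    have f6 : ((b - a).factorial : ℝ) ≠ 0 := Nat.cast_ne_zero.mpr (Nat.factorial_ne_zero _)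
    have f7 : ((b).factorial : ℝ) ≠ 0 := Nat.cast_ne_zero.mpr (Nat.factorial_ne_zero _)
    have f8 : ((a).factorial : ℝ) ≠ 0 := Nat.cast_ne_zero.mpr (Nat.factorial_ne_zero _)
    have f9 : ((j).factorial : ℝ) ≠ 0 := Nat.cast_ne_zero.mpr (Nat.factorial_ne_zero _)
    field_simp
  · have h1 : (b - a).choose (j - k) = 0 := Nat.choose_eq_zero_of_lt (by omega)
    have h2 : (b - j).choose (a - k) = 0 := Nat.choose_eq_zero_of_lt (by omega)
    rw [h1, h2]
    simp

theorem hypgeo_mixture_uniform (n l : ℕ) (hn : 1 ≤ n) (hl : l ∈ Finset.Icc 1 n)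
    (k : ℕ) (hk : k ≤ l - 1) :
    (1 / (n : ℝ)) * ∑ m ∈ Finset.Icc 1 n, hypPMF (n - 1) (l - 1) (m - 1) k
      = 1 / (l : ℝ) := by
  simp only [Finset.mem_Icc] at hl
  obtain ⟨hl1, hln⟩ := hl
  have hmap : Finset.Icc 1 n = Finset.map ⟨fun j => j + 1, add_left_injective 1⟩
      (Finset.range n) := by
    ext x
    simp only [Finset.mem_Icc, Finset.mem_map, Finset.mem_range,
      Function.Embedding.coeFn_mk]
    constructor
    · intro ⟨h1, h2⟩; exact ⟨x - 1, by omega, by omega⟩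
    · rintro ⟨j, hj, rfl⟩; omega
  rw [hmap, Finset.sum_map]
  simp only [Function.Embedding.coeFn_mk, Nat.add_sub_cancel]
  have key : ∀ j ∈ Finset.range n, hypPMF (n - 1) (l - 1) j k
      = ((j.choose k : ℝ) * (((n - 1) - j).choose ((l - 1) - k) : ℝ))
          / (((n - 1).choose (l - 1) : ℕ) : ℝ) := by
    intro j hj
    simp only [Finset.mem_range] at hj
    unfold hypPMF
    by_cases hkj : k ≤ j
    · rw [if_pos hkj]
      exact hyp_term_swap (l - 1) (n - 1) j k (by omega) (by omega) hk hkj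
    · rw [if_neg hkj, Nat.choose_eq_zero_of_lt (by omega)]
      simp
  rw [Finset.sum_congr rfl key]
  rw [← Finset.sum_div]
  have hsum : ∑ j ∈ Finset.range n,
      ((j.choose k : ℝ) * (((n - 1) - j).choose ((l - 1) - k) : ℝ))
        = ((n.choose l : ℕ) : ℝ) := by
    have hrange : Finset.range n = Finset.range ((n - 1) + 1) := by congr 1; omega
    rw [hrange]
    norm_cast
    rw [vandermonde_upper k (n - 1) (l - 1 - k)]
    congr 1 <;> omega
  rw [hsum]
  have hc : ((n - 1).choose (l - 1)) ≠ 0 := (Nat.choose_pos (by omega)).ne'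
  have hid : n.choose l * l = n * (n - 1).choose (l - 1) := by
    have h := Nat.add_one_mul_choose_eq (n - 1) (l - 1)
    have e1 : n - 1 + 1 = n := by omega
    have e2 : l - 1 + 1 = l := by omega
    simp only [Nat.succ_eq_add_one, e1, e2] at h
    exact h.symm
  have hn0 : (n : ℝ) ≠ 0 := by positivity
  have hl0 : (l : ℝ) ≠ 0 := by exact_mod_cast (by omega : l ≠ 0)
  have hc0 : (((n - 1).choose (l - 1) : ℕ) : ℝ) ≠ 0 := Nat.cast_ne_zero.mpr hc
  field_simp
  exact_mod_cast hid
end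

section
/- Let k ≥ 1 be an integer and let U be uniformly distributed on (0,1). Then Var(H(⌊kU⌋)) ≤ 4e^{−2} + (1+√2)² < 7. -/
open MeasureTheory ProbabilityTheory Finset Filter
open scoped ENNReal NNReal

/-! Since `⌊kU⌋` is uniform on `{0, …, k-1}`, the variance is the empirical variance of
`H_0, …, H_{k-1}`. The closed forms `∑_{j<k} H_j = k H_{k-1} - (k-1)` and
`∑_{j<k} H_j² = k H_{k-1}² - (2k-1) H_{k-1} + 2(k-1)` give the exact value
`1 - H_{k-1}/k - 1/k² ≤ 1`, well below the stated constant, which is `< 7` because `e > 2`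
and `√2 < 3/2`. -/

lemma harm_succ (n : ℕ) : harm (n + 1) = harm n + 1 / (n + 1) := by
  simp [harm, Finset.sum_range_succ]

lemma harm_nonneg (n : ℕ) : 0 ≤ harm n := by
  unfold harm; positivity

lemma sum_range_succ_harm (n : ℕ) :
    ∑ j ∈ range (n + 1), harm j = (n + 1) * harm n - n := by
  induction n with
  | zero => simp [harm]
  | succ m ih =>
    rw [Finset.sum_range_succ, ih, harm_succ]
    push_cast
    field_simp
    ring

lemma sum_range_succ_harm_sq (n : ℕ) :
    ∑ j ∈ range (n + 1), harm j ^ 2 = (n + 1) * harm n ^ 2 - (2 * n + 1) * harm n + 2 * n := by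
  induction n with
  | zero => simp [harm]
  | succ m ih =>
    rw [Finset.sum_range_succ, ih, harm_succ]
    push_cast
    field_simp
    ring

lemma mean_harm_sq_sub_sq_mean_harm (n : ℕ) :
    (∑ j ∈ range (n + 1), harm j ^ 2) / (n + 1) - ((∑ j ∈ range (n + 1), harm j) / (n + 1)) ^ 2
      = 1 - harm n / (n + 1) - 1 / (n + 1) ^ 2 := by
  rw [sum_range_succ_harm, sum_range_succ_harm_sq]
  field_simp
  ring

lemma ae_restrict_Ioc_nat_floor_eq (j : ℕ) :
    ∀ᵐ y ∂volume.restrict (Set.Ioc (j : ℝ) (j + 1)), ⌊y⌋₊ = j := by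
  refine (ae_restrict_congr_set Ioo_ae_eq_Ioc).mp (ae_restrict_of_forall_mem measurableSet_Ioo ?_)
  intro y hy
  rw [Nat.floor_eq_iff (by linarith [hy.1, j.cast_nonneg (α := ℝ)])]
  exact ⟨hy.1.le, hy.2⟩

lemma intervalIntegrable_comp_nat_floor (g : ℕ → ℝ) (j : ℕ) :
    IntervalIntegrable (fun y => g ⌊y⌋₊) volume j (j + 1) := by
  rw [intervalIntegrable_iff_integrableOn_Ioc_of_le (by linarith)]
  refine (integrableOn_const (C := g j) (by simp)).congr_fun_ae ?_
  filter_upwards [ae_restrict_Ioc_nat_floor_eq j] with y hy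
  rw [hy]

lemma intervalIntegral_comp_nat_floor (g : ℕ → ℝ) (j : ℕ) :
    ∫ y in (j : ℝ)..(j + 1), g ⌊y⌋₊ = g j := by
  rw [intervalIntegral.integral_of_le (by linarith),
    integral_congr_ae ((ae_restrict_Ioc_nat_floor_eq j).mono fun y hy => congrArg g hy)]
  simp

lemma intervalIntegral_zero_comp_nat_floor (g : ℕ → ℝ) (k : ℕ) :
    ∫ y in (0 : ℝ)..k, g ⌊y⌋₊ = ∑ j ∈ range k, g j := by
  have h := intervalIntegral.sum_integral_adjacent_intervals (a := Nat.cast) (n := k)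
    fun j _ => by simpa using intervalIntegrable_comp_nat_floor g j
  simp only [Nat.cast_succ, intervalIntegral_comp_nat_floor, Nat.cast_zero] at h
  exact h.symm

lemma setIntegral_Ioo_comp_nat_floor_mul (g : ℕ → ℝ) {k : ℕ} (hk : k ≠ 0) :
    ∫ x in Set.Ioo (0 : ℝ) 1, g ⌊(k : ℝ) * x⌋₊ = (∑ j ∈ range k, g j) / k := by
  rw [setIntegral_congr_set Ioo_ae_eq_Ioc, ← intervalIntegral.integral_of_le zero_le_one,
    intervalIntegral.integral_comp_mul_left (fun y => g ⌊y⌋₊) (by exact_mod_cast hk), mul_zero,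
    mul_one, intervalIntegral_zero_comp_nat_floor, smul_eq_mul, inv_mul_eq_div]

instance : IsProbabilityMeasure (volume.restrict (Set.Ioo (0 : ℝ) 1)) :=
  ⟨by simp [Real.volume_Ioo]⟩

lemma measurable_comp_nat_floor_mul (g : ℕ → ℝ) (k : ℕ) :
    Measurable fun x : ℝ => g ⌊(k : ℝ) * x⌋₊ :=
  measurable_from_top.comp (measurable_const.mul measurable_id).nat_floor

lemma variance_comp_nat_floor_mul (g : ℕ → ℝ) {k : ℕ} (hk : k ≠ 0) :
    Var[fun x : ℝ => g ⌊(k : ℝ) * x⌋₊; volume.restrict (Set.Ioo (0 : ℝ) 1)]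
      = (∑ j ∈ range k, g j ^ 2) / k - ((∑ j ∈ range k, g j) / k) ^ 2 := by
  have hbound : ∀ᵐ x ∂volume.restrict (Set.Ioo (0 : ℝ) 1),
      ‖g ⌊(k : ℝ) * x⌋₊‖ ≤ ∑ j ∈ range k, ‖g j‖ := by
    refine ae_restrict_of_forall_mem measurableSet_Ioo fun x hx => ?_
    refine single_le_sum (f := fun j => ‖g j‖) (fun _ _ => norm_nonneg _) (mem_range.2 ?_)
    rw [Nat.floor_lt (by nlinarith [hx.1])]
    nlinarith [hx.2, (by positivity : (0 : ℝ) < k)]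
  have hmem := MemLp.of_bound (p := 2)
    (measurable_comp_nat_floor_mul g k).aestronglyMeasurable _ hbound
  rw [variance_eq_sub hmem, ← setIntegral_Ioo_comp_nat_floor_mul g hk,
    ← setIntegral_Ioo_comp_nat_floor_mul (fun j => g j ^ 2) hk]
  rfl

lemma four_mul_exp_neg_two_add_one_add_sqrt_two_sq_lt_seven :
    4 * Real.exp (-2) + (1 + Real.sqrt 2) ^ 2 < 7 := by
  have hexp : 4 < Real.exp 2 := by
    have h := Real.add_one_lt_exp (one_ne_zero (α := ℝ))
    rw [show (2 : ℝ) = 1 + 1 by norm_num, Real.exp_add]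
    nlinarith
  have hexp' : 4 * Real.exp (-2) < 1 := by
    rw [Real.exp_neg, ← div_eq_mul_inv, div_lt_one (by positivity)]
    exact hexp
  nlinarith [Real.sqrt_nonneg 2, Real.sq_sqrt (zero_le_two (α := ℝ))]

theorem variance_harm_floor_lt_seven (k : ℕ) (hk : 1 ≤ k)
    {Ω : Type*} [MeasurableSpace Ω] (P : Measure Ω) [IsProbabilityMeasure P]
    (U : Ω → ℝ) (hU : Measure.map U P = volume.restrict (Set.Ioo (0 : ℝ) 1)) :
    variance (fun ω => harm ⌊(k : ℝ) * U ω⌋₊) P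
        ≤ 4 * Real.exp (-2) + (1 + Real.sqrt 2) ^ 2 ∧
      4 * Real.exp (-2) + (1 + Real.sqrt 2) ^ 2 < 7 := by
  have hUm : AEMeasurable U P := .of_map_ne_zero (hU ▸ IsProbabilityMeasure.ne_zero _)
  obtain ⟨n, rfl⟩ : ∃ n, k = n + 1 := Nat.exists_eq_add_of_le' hk
  refine ⟨?_, four_mul_exp_neg_two_add_one_add_sqrt_two_sq_lt_seven⟩
  calc Var[fun ω => harm ⌊((n + 1 : ℕ) : ℝ) * U ω⌋₊; P]
      = Var[fun x => harm ⌊((n + 1 : ℕ) : ℝ) * x⌋₊; volume.restrict (Set.Ioo (0 : ℝ) 1)] := by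
        rw [← hU, variance_map (measurable_comp_nat_floor_mul harm _).aemeasurable hUm]
        rfl
    _ = 1 - harm n / (n + 1) - 1 / (n + 1) ^ 2 := by
        rw [variance_comp_nat_floor_mul harm n.succ_ne_zero, ← mean_harm_sq_sub_sq_mean_harm]
        push_cast
        rfl
    _ ≤ 1 := by
        have : 0 ≤ harm n / (n + 1) := by have := harm_nonneg n; positivity
        have : 0 ≤ 1 / ((n : ℝ) + 1) ^ 2 := by positivity
        linarith
    _ ≤ 4 * Real.exp (-2) + (1 + Real.sqrt 2) ^ 2 := by
        nlinarith [Real.exp_pos (-2), Real.sqrt_nonneg 2]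
end

section
/- For every integer n ≥ 2: Σ_{m=1}^{n−1} 1/H_m ≤ 3n/log n. -/
open MeasureTheory ProbabilityTheory Finset Filter
open scoped ENNReal NNReal

/-!
Split the sum at `s = ⌊√n⌋`. The first `s` terms are at most `1`, since `H_m ≥ 1`; the others
are at most `2 / log n`, since `H_m ≥ log (m + 1)` and `(m + 1)² > n`. Finally `log n ≤ √n`
gives `s ≤ √n ≤ n / log n`, so the sum is at most `n / log n + 2 n / log n`.
-/

lemma harm_eq_harmonic (m : ℕ) : harm m = harmonic m := by
  simp [harm, harmonic, one_div]

lemma one_le_harm {m : ℕ} (hm : m ≠ 0) : 1 ≤ harm m := by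
  obtain ⟨k, rfl⟩ := Nat.exists_eq_succ_of_ne_zero hm
  rw [harm, Finset.sum_range_succ']
  norm_num
  positivity

lemma log_le_two_mul_harm {n m : ℕ} (hn : 0 < n) (hnm : n ≤ (m + 1) ^ 2) :
    Real.log n ≤ 2 * harm m := by
  have hlog : Real.log n ≤ 2 * Real.log (m + 1) := by
    calc Real.log n ≤ Real.log (((m : ℝ) + 1) ^ 2) :=
          Real.log_le_log (by positivity) (by exact_mod_cast hnm)
      _ = 2 * Real.log (m + 1) := by rw [Real.log_pow]; norm_num
  have := log_add_one_le_harmonic m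
  push_cast at this
  rw [harm_eq_harmonic]
  linarith

lemma inv_harm_le {n m : ℕ} (hn : 1 < n) (hm : m ≠ 0) :
    1 / harm m ≤ 2 / Real.log n + if m ≤ Nat.sqrt n then 1 else 0 := by
  have hL : 0 < Real.log n := Real.log_pos (by exact_mod_cast hn)
  have hH := one_le_harm hm
  split_ifs with hms
  · have : 1 / harm m ≤ 1 := div_le_one_of_le₀ hH (by linarith)
    linarith [div_pos two_pos hL]
  · have hnm : n ≤ (m + 1) ^ 2 := by
      have := Nat.lt_succ_sqrt n
      nlinarith
    have := log_le_two_mul_harm (by omega) hnm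
    rw [add_zero, div_le_div_iff₀ (by linarith) hL]
    linarith

lemma Real.log_le_sqrt {x : ℝ} (hx : 0 ≤ x) : Real.log x ≤ √x := by
  rcases hx.eq_or_lt with rfl | hx
  · simp
  set y := √(√x)
  have hy : 0 < y := by positivity
  have hy2 : y ^ 2 = √x := Real.sq_sqrt (Real.sqrt_nonneg x)
  have hlog : Real.log x = 4 * Real.log y := by
    rw [Real.log_sqrt (Real.sqrt_nonneg x), Real.log_sqrt hx.le]
    ring
  -- `log x = 4 log y ≤ 4 (y - 1) ≤ y ^ 2`
  nlinarith [Real.log_le_sub_one_of_pos hy, sq_nonneg (y - 2)]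

lemma Real.sqrt_le_div_log {x : ℝ} (hx : 1 < x) : √x ≤ x / Real.log x := by
  rw [le_div_iff₀ (Real.log_pos hx)]
  calc √x * Real.log x ≤ √x * √x := by gcongr; exact Real.log_le_sqrt (by linarith)
    _ = x := Real.mul_self_sqrt (by linarith)

theorem sum_inv_harmonic_le (n : ℕ) (hn : 2 ≤ n) :
    ∑ m ∈ Finset.Icc 1 (n - 1), 1 / harm m ≤ 3 * (n : ℝ) / Real.log n := by
  have hn1 : (1 : ℝ) < n := by exact_mod_cast hn
  set L := Real.log n
  set s := Nat.sqrt n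
  have hcount : #{m ∈ Icc 1 (n - 1) | m ≤ s} ≤ s := by
    calc #{m ∈ Icc 1 (n - 1) | m ≤ s} ≤ #(Icc 1 s) :=
          card_le_card fun m hm => by simp only [mem_filter, mem_Icc] at hm ⊢; omega
      _ = s := by simp
  calc ∑ m ∈ Icc 1 (n - 1), 1 / harm m
      ≤ ∑ m ∈ Icc 1 (n - 1), (2 / L + if m ≤ s then 1 else 0) :=
        sum_le_sum fun m hm => inv_harm_le hn (by simp at hm; omega)
    _ = ((n - 1 : ℕ) : ℝ) * (2 / L) + #{m ∈ Icc 1 (n - 1) | m ≤ s} := by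
        simp [sum_add_distrib, sum_boole]
    _ ≤ ((n : ℝ) - 1) * (2 / L) + n / L := by
        gcongr
        · rw [Nat.cast_sub (by omega), Nat.cast_one]
        · exact (Nat.cast_le.mpr hcount).trans
            (Real.nat_sqrt_le_real_sqrt.trans (Real.sqrt_le_div_log hn1))
    _ = (3 * n - 2) / L := by ring
    _ ≤ 3 * n / L := by gcongr; linarith
end

section
/- For any two probability distributions μ, ν on the nonnegative real line with finite mean, d_W(MixPo(μ), MixPo(ν)) ≤ d_W(μ, ν); that is, the map μ ↦ MixPo(μ) is a weak contraction for the Wasserstein distance d_W. -/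
open MeasureTheory ProbabilityTheory Finset Filter
open scoped ENNReal NNReal

open Real NNReal
open scoped Nat

/-! A test function `f` for `d_W` restricts to a `1`-Lipschitz function on `ℕ`, and
`∫ f d MixPo(μ) = ∫ g dμ` with `g λ = ∫ f dPo(λ⁺)`. Since `Po(a + d) = Po(a) ∗ Po(d)`,
coupling `K ~ Po(a)` with an independent `M ~ Po(d)` gives
`|g (a + d) - g a| ≤ E |f (K + M) - f K| ≤ E M = d`. So `g` is `1`-Lipschitz, hence itself a
test function for `d_W(μ, ν)`. -/

def UnitScaleLipschitz (f : ℝ → ℝ) : Prop :=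
  ∀ x y, |x - y| ≤ 1 → |f x - f y| ≤ 1

lemma LipschitzWith.unitScaleLipschitz {f : ℝ → ℝ} (hf : LipschitzWith 1 f) :
    UnitScaleLipschitz f := fun x y hxy ↦ by
  simpa [← Real.dist_eq] using (hf.dist_le_mul x y).trans (by simpa [Real.dist_eq] using hxy)

namespace UnitScaleLipschitz

variable {f : ℝ → ℝ} (hf : UnitScaleLipschitz f)
include hf

lemma abs_sub_le_natCast (n : ℕ) {x y : ℝ} (h : |x - y| ≤ n) : |f x - f y| ≤ n := by
  induction n generalizing x with
  | zero => simp_all [sub_eq_zero]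
  | succ n ih =>
    set z := max (min x (y + n)) (y - n)
    have hxz : |x - z| ≤ 1 := by
      rw [abs_le] at h ⊢; push_cast at h
      constructor <;> grind
    have hzy : |z - y| ≤ n := by
      rw [abs_le]; constructor <;> grind
    calc |f x - f y| ≤ |f x - f z| + |f z - f y| := abs_sub_le _ _ _
      _ ≤ 1 + n := add_le_add (hf x z hxz) (ih hzy)
      _ = (n + 1 : ℕ) := by push_cast; ring

lemma abs_sub_le (x y : ℝ) : |f x - f y| ≤ |x - y| + 1 :=
  (hf.abs_sub_le_natCast _ (Nat.le_ceil _)).trans (Nat.ceil_lt_add_one (abs_nonneg _)).le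

lemma lipschitzWith_comp_natCast : LipschitzWith 1 (f ∘ Nat.cast : ℕ → ℝ) := by
  refine LipschitzWith.of_dist_le_mul fun m n ↦ ?_
  have h := hf.abs_sub_le_natCast (m - n : ℤ).natAbs (x := m) (y := n) (by simp)
  simpa [Real.dist_eq, Nat.dist_eq] using h

section Integral

variable (hfm : Measurable f) {μ : Measure ℝ}
include hfm

lemma integrable [IsFiniteMeasure μ] (hμ : Integrable id μ) : Integrable f μ := by
  refine ((integrable_const (|f 0| + 1)).add hμ.norm).mono' hfm.aestronglyMeasurable
    (.of_forall fun x ↦ ?_)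
  have h := hf.abs_sub_le x 0
  simp only [sub_zero] at h
  simp only [Real.norm_eq_abs, Pi.add_apply, id]
  linarith [abs_sub_abs_le_abs_sub (f x) (f 0)]

lemma abs_integral_sub_apply_zero_le [IsProbabilityMeasure μ] (hμ : Integrable id μ) :
    |∫ x, f x ∂μ - f 0| ≤ ∫ x, |x| ∂μ + 1 := by
  have hint := hf.integrable hfm hμ
  have habs : Integrable (fun x ↦ |x|) μ := hμ.abs
  calc |∫ x, f x ∂μ - f 0| = |∫ x, (f x - f 0) ∂μ| := by
        rw [integral_sub hint (integrable_const _), integral_const, probReal_univ, one_smul]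
    _ ≤ ∫ x, |f x - f 0| ∂μ := abs_integral_le_integral_abs
    _ ≤ ∫ x, (|x| + 1) ∂μ :=
        integral_mono (hint.sub (integrable_const _)).abs (habs.add (integrable_const 1))
          fun x ↦ by simpa using hf.abs_sub_le x 0
    _ = ∫ x, |x| ∂μ + 1 := by
        rw [integral_add habs (integrable_const 1), integral_const, probReal_univ, one_smul]

lemma abs_integral_sub_integral_le_dW {ν : Measure ℝ} [IsProbabilityMeasure μ]
    [IsProbabilityMeasure ν] (hμ : Integrable id μ) (hν : Integrable id ν) :
    |∫ x, f x ∂μ - ∫ x, f x ∂ν| ≤ dW μ ν := by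
  refine le_csSup ⟨∫ x, |x| ∂μ + ∫ x, |x| ∂ν + 2, ?_⟩ ⟨f, hfm, hf, rfl⟩
  rintro _ ⟨g, hgm, hg, rfl⟩
  have hgμ := abs_integral_sub_apply_zero_le hg hgm hμ
  have hgν := abs_integral_sub_apply_zero_le hg hgm hν
  rw [abs_le] at hgμ hgν ⊢
  constructor <;> linarith

end Integral

end UnitScaleLipschitz

lemma dW_nonneg {μ ν : Measure ℝ} [IsProbabilityMeasure μ] [IsProbabilityMeasure ν]
    (hμ : Integrable id μ) (hν : Integrable id ν) : 0 ≤ dW μ ν := by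
  have h0 : UnitScaleLipschitz (fun _ ↦ 0) := fun _ _ _ ↦ by simp
  simpa using h0.abs_integral_sub_integral_le_dW measurable_const hμ hν

lemma LipschitzWith.integrable_of_integrable_natCast {K : ℝ≥0} {g : ℕ → ℝ}
    (hg : LipschitzWith K g) {ν : Measure ℕ} [IsFiniteMeasure ν]
    (hν : Integrable (fun n : ℕ ↦ (n : ℝ)) ν) : Integrable g ν := by
  refine ((integrable_const ‖g 0‖).add (hν.const_mul K)).mono' .of_discrete
    (.of_forall fun n ↦ ?_)
  have h := hg.dist_le_mul n 0
  rw [dist_eq_norm, Nat.dist_eq] at h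
  simp only [Nat.cast_zero, sub_zero, Nat.abs_cast] at h
  show ‖g n‖ ≤ ‖g 0‖ + K * n
  linarith [norm_le_norm_add_norm_sub' (g n) (g 0)]

namespace ProbabilityTheory

lemma hasSum_natCast_mul_poisson (r : ℝ≥0) :
    HasSum (fun n : ℕ ↦ n * (exp (-r) * r ^ n / n !)) r := by
  have hshift : (fun n : ℕ ↦ ((n + 1 : ℕ) : ℝ) * (exp (-r) * r ^ (n + 1) / (n + 1)!)) =
      fun n ↦ r * (exp (-r) * r ^ n / n !) := by
    ext n
    rw [Nat.factorial_succ]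
    push_cast
    field_simp
    ring
  have h := (hasSum_one_poissonMeasure r).mul_left (r : ℝ)
  rw [← hshift] at h
  exact (hasSum_nat_add_iff' 1).mp (by simpa using h)

lemma integrable_natCast_poissonMeasure (r : ℝ≥0) : Integrable (fun n : ℕ ↦ (n : ℝ)) Po(r) := by
  rw [integrable_poissonMeasure_iff]
  simpa [mul_comm] using (hasSum_natCast_mul_poisson r).summable

lemma integral_natCast_poissonMeasure (r : ℝ≥0) : ∫ n, (n : ℝ) ∂Po(r) = r := by
  rw [integral_poissonMeasure]
  simpa [mul_comm] using (hasSum_natCast_mul_poisson r).tsum_eq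

lemma lintegral_natCast_poissonMeasure (r : ℝ≥0) : ∫⁻ n, (n : ℝ≥0∞) ∂Po(r) = r := by
  have := ofReal_integral_eq_lintegral_ofReal (integrable_natCast_poissonMeasure r)
    (.of_forall fun n ↦ n.cast_nonneg)
  simpa [integral_natCast_poissonMeasure] using this.symm

lemma integrable_poissonMeasure_of_lipschitzWith {K : ℝ≥0} {g : ℕ → ℝ}
    (hg : LipschitzWith K g) (r : ℝ≥0) : Integrable g Po(r) :=
  hg.integrable_of_integrable_natCast (integrable_natCast_poissonMeasure r)

lemma abs_integral_poissonMeasure_add_sub_le {g : ℕ → ℝ} (hg : LipschitzWith 1 g)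
    (a d : ℝ≥0) : |∫ n, g n ∂Po(a + d) - ∫ n, g n ∂Po(a)| ≤ d := by
  have hadd : Integrable (fun p : ℕ × ℕ ↦ g (p.1 + p.2)) (Po(a).prod Po(d)) := by
    have h := integrable_poissonMeasure_of_lipschitzWith hg (a + d)
    rw [← poissonMeasure_conv_poissonMeasure, Measure.conv] at h
    exact (integrable_map_measure h.1 (by fun_prop)).mp h
  have hfst : Integrable (fun p : ℕ × ℕ ↦ g p.1) (Po(a).prod Po(d)) :=
    (integrable_poissonMeasure_of_lipschitzWith hg a).comp_fst _
  have hsnd : Integrable (fun p : ℕ × ℕ ↦ (p.2 : ℝ)) (Po(a).prod Po(d)) :=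
    (integrable_natCast_poissonMeasure d).comp_snd _
  calc |∫ n, g n ∂Po(a + d) - ∫ n, g n ∂Po(a)|
      = |∫ p, (g (p.1 + p.2) - g p.1) ∂(Po(a).prod Po(d))| := by
        rw [← poissonMeasure_conv_poissonMeasure, Measure.conv,
          integral_map (by fun_prop) .of_discrete, integral_sub hadd hfst, integral_fun_fst]
        simp
    _ ≤ ∫ p, (p.2 : ℝ) ∂(Po(a).prod Po(d)) := by
        refine abs_integral_le_integral_abs.trans
          (integral_mono (hadd.sub hfst).abs hsnd fun p ↦ ?_)
        simpa [← Real.dist_eq, Nat.dist_eq] using hg.dist_le_mul (p.1 + p.2) p.1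
    _ = d := by simp [integral_fun_snd, integral_natCast_poissonMeasure]

lemma lipschitzWith_integral_poissonMeasure {g : ℕ → ℝ} (hg : LipschitzWith 1 g) :
    LipschitzWith 1 fun r ↦ ∫ n, g n ∂Po(r) := by
  refine LipschitzWith.of_dist_le_mul fun r s ↦ ?_
  wlog hrs : r ≤ s generalizing r s
  · rw [dist_comm, dist_comm r]; exact this s r (le_of_not_ge hrs)
  obtain ⟨d, rfl⟩ := exists_add_of_le hrs
  simpa [Real.dist_eq, NNReal.dist_eq, abs_sub_comm] using
    abs_integral_poissonMeasure_add_sub_le hg r d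

end ProbabilityTheory

section MixedPoisson

variable {μ : Measure ℝ}

lemma measurable_poissonMeasure_toNNReal_singleton (k : ℕ) :
    Measurable fun l : ℝ ↦ Po(l.toNNReal) {k} := by
  simp_rw [poissonMeasure_singleton]
  fun_prop

lemma mixPo_singleton (hμ : ∀ᵐ l ∂μ, 0 ≤ l) (k : ℕ) :
    mixPo μ {k} = ∫⁻ l, Po(l.toNNReal) {k} ∂μ := by
  rw [mixPo, Measure.sum_smul_dirac_singleton]
  refine lintegral_congr_ae (hμ.mono fun l hl ↦ ?_)
  dsimp only
  rw [poissonMeasure_singleton, Real.coe_toNNReal _ hl]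

lemma lintegral_mixPo (hμ : ∀ᵐ l ∂μ, 0 ≤ l) (h : ℕ → ℝ≥0∞) :
    ∫⁻ k, h k ∂mixPo μ = ∫⁻ l, ∫⁻ k, h k ∂Po(l.toNNReal) ∂μ := by
  simp_rw [lintegral_countable', mixPo_singleton hμ]
  rw [lintegral_tsum fun k ↦
    ((measurable_poissonMeasure_toNNReal_singleton k).const_mul _).aemeasurable]
  simp_rw [lintegral_const_mul _ (measurable_poissonMeasure_toNNReal_singleton _)]

lemma mixPo_univ (hμ : ∀ᵐ l ∂μ, 0 ≤ l) : mixPo μ Set.univ = μ Set.univ := by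
  simpa using lintegral_mixPo hμ 1

lemma integrable_natCast_mixPo (hμ : ∀ᵐ l ∂μ, 0 ≤ l) (hμint : Integrable id μ) :
    Integrable (fun k : ℕ ↦ (k : ℝ)) (mixPo μ) := by
  refine ⟨.of_discrete, ?_⟩
  calc ∫⁻ k, ‖(k : ℝ)‖ₑ ∂mixPo μ = ∫⁻ l, (l.toNNReal : ℝ≥0∞) ∂μ := by
        simp [lintegral_mixPo hμ, lintegral_natCast_poissonMeasure]
    _ ≤ ∫⁻ l, ‖l‖ₑ ∂μ := lintegral_mono fun l ↦ by
        rw [Real.enorm_eq_ofReal_abs]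
        exact ENNReal.ofReal_le_ofReal (le_abs_self l)
    _ < ∞ := hμint.2

lemma integral_mixPo (hμ : ∀ᵐ l ∂μ, 0 ≤ l) {g : ℕ → ℝ} (hg : Integrable g (mixPo μ)) :
    ∫ k, g k ∂mixPo μ = ∫ l, ∫ k, g k ∂Po(l.toNNReal) ∂μ := by
  have hw (k : ℕ) : Measurable fun l : ℝ ↦ Po(l.toNNReal).real {k} :=
    (measurable_poissonMeasure_toNNReal_singleton k).ennreal_toReal
  have hfin : ∑' k, ∫⁻ l, ‖Po(l.toNNReal).real {k} * g k‖ₑ ∂μ ≠ ∞ := by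
    convert hg.2.ne using 1
    rw [lintegral_countable']
    refine tsum_congr fun k ↦ ?_
    simp_rw [enorm_mul, Real.enorm_of_nonneg measureReal_nonneg, measureReal_def,
      ENNReal.ofReal_toReal (measure_ne_top _ _)]
    rw [lintegral_mul_const _ (measurable_poissonMeasure_toNNReal_singleton k),
      mixPo_singleton hμ, mul_comm]
  calc ∫ k, g k ∂mixPo μ = ∑' k, (mixPo μ).real {k} • g k := integral_countable hg
    _ = ∑' k, ∫ l, Po(l.toNNReal).real {k} * g k ∂μ := by
        refine tsum_congr fun k ↦ ?_
        rw [integral_mul_const, smul_eq_mul, measureReal_def, mixPo_singleton hμ]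
        simp_rw [measureReal_def]
        rw [integral_toReal (measurable_poissonMeasure_toNNReal_singleton k).aemeasurable
          (.of_forall fun _ ↦ measure_lt_top _ _)]
    _ = ∫ l, ∑' k, Po(l.toNNReal).real {k} * g k ∂μ :=
        (integral_tsum (fun k ↦ ((hw k).mul_const _).aestronglyMeasurable) hfin).symm
    _ = ∫ l, ∫ k, g k ∂Po(l.toNNReal) ∂μ := by
        simp_rw [integral_poissonMeasure, poissonMeasure_real_singleton, smul_eq_mul]

lemma integral_map_natCast_mixPo [IsFiniteMeasure μ] (hμ : ∀ᵐ l ∂μ, 0 ≤ l)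
    (hμint : Integrable id μ) {f : ℝ → ℝ} (hfm : Measurable f) {K : ℝ≥0}
    (hf : LipschitzWith K (f ∘ Nat.cast : ℕ → ℝ)) :
    ∫ x, f x ∂(mixPo μ).map (Nat.cast : ℕ → ℝ) = ∫ l, ∫ k, f k ∂Po(l.toNNReal) ∂μ := by
  have : IsFiniteMeasure (mixPo μ) := ⟨(mixPo_univ hμ).trans_lt (measure_lt_top μ _)⟩
  rw [integral_map .of_discrete hfm.aestronglyMeasurable]
  exact integral_mixPo hμ
    (hf.integrable_of_integrable_natCast (integrable_natCast_mixPo hμ hμint))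

end MixedPoisson

theorem mixPo_dW_contraction (μ ν : Measure ℝ)
    [IsProbabilityMeasure μ] [IsProbabilityMeasure ν]
    (hμ : μ {x | x < 0} = 0) (hν : ν {x | x < 0} = 0)
    (hμint : Integrable id μ) (hνint : Integrable id ν) :
    dW (Measure.map (Nat.cast : ℕ → ℝ) (mixPo μ))
        (Measure.map (Nat.cast : ℕ → ℝ) (mixPo ν)) ≤ dW μ ν := by
  have hμ₀ : ∀ᵐ l ∂μ, 0 ≤ l := ae_iff.mpr (by simpa using hμ)
  have hν₀ : ∀ᵐ l ∂ν, 0 ≤ l := ae_iff.mpr (by simpa using hν)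
  refine Real.sSup_le ?_ (dW_nonneg hμint hνint)
  rintro _ ⟨f, hfm, hf, rfl⟩
  have hg : LipschitzWith 1 (f ∘ Nat.cast : ℕ → ℝ) :=
    UnitScaleLipschitz.lipschitzWith_comp_natCast hf
  have hG : LipschitzWith 1 fun l : ℝ ↦ ∫ k, f k ∂Po(l.toNNReal) := by
    simpa [Function.comp_def] using
      (lipschitzWith_integral_poissonMeasure hg).comp Real.lipschitzWith_toNNReal
  rw [integral_map_natCast_mixPo hμ₀ hμint hfm hg, integral_map_natCast_mixPo hν₀ hνint hfm hg]
  exact hG.unitScaleLipschitz.abs_integral_sub_integral_le_dW hG.continuous.measurable hμint hνint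
end

section
/- Let n ≥ 1 and l ∈ {1,…,n}, and let X_{n,l} be the depth of the node containing l in the random binary search tree built from a uniformly random permutation of {1,…,n}. Then E X_{n,l} = H_l + H_{n+1−l} − 2; equivalently, E(1 + X_{n,l}) = H_l + H_{n+1−l} − 1 (Arora–Dent formula). -/
/-!
By linearity, `E R₋` is the sum over the values `a < l` of the probability that `a` is an
ascending record before `l`. This happens exactly when `a` occurs first among the values
`a, a + 1, …, l`, which by symmetry has probability `1 / (l - a + 1)`; summing gives `H_l - 1`.
Reflecting the values, `v ↦ n + 1 - v`, turns the descending records above `l` into ascending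
records below `n + 1 - l`, so `E R₊ = H_{n+1-l} - 1`.
-/

open MeasureTheory ProbabilityTheory Finset Filter
open scoped ENNReal NNReal

open Equiv

namespace Equiv.Perm

variable {α : Type*} [LinearOrder α]

/-- `π` is read in one-line notation, so `π⁻¹ a` is the position of the value `a`. -/
def ComesFirstIn (π : Perm α) (S : Finset α) (a : α) : Prop :=
  ∀ b ∈ S, π⁻¹ a ≤ π⁻¹ b

instance (π : Perm α) (S : Finset α) (a : α) : Decidable (π.ComesFirstIn S a) :=
  inferInstanceAs (Decidable (∀ b ∈ S, π⁻¹ a ≤ π⁻¹ b))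

theorem ComesFirstIn.swap_mul {π : Perm α} {S : Finset α} {a s : α} (hπ : π.ComesFirstIn S a)
    (ha : a ∈ S) (hs : s ∈ S) : (swap a s * π).ComesFirstIn S s := by
  intro b hb
  simp only [mul_inv_rev, swap_inv, Perm.mul_apply, swap_apply_right]
  refine hπ _ ?_
  rw [swap_apply_def]
  split_ifs <;> assumption

theorem card_comesFirstIn_eq [Fintype α] {S : Finset α} {a s : α} (ha : a ∈ S) (hs : s ∈ S) :
    #{π : Perm α | π.ComesFirstIn S a} = #{π : Perm α | π.ComesFirstIn S s} := by
  refine card_equiv (Equiv.mulLeft (swap a s)) fun π => ?_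
  simp only [mem_filter, mem_univ, true_and, coe_mulLeft]
  refine ⟨fun h => h.swap_mul ha hs, fun h => ?_⟩
  simpa [swap_comm] using h.swap_mul hs ha

theorem card_filter_comesFirstIn {S : Finset α} (hS : S.Nonempty) (π : Perm α) :
    #{a ∈ S | π.ComesFirstIn S a} = 1 := by
  obtain ⟨a, ha, hmin⟩ := S.exists_min_image (π⁻¹ ·) hS
  refine card_eq_one.mpr ⟨a, eq_singleton_iff_unique_mem.mpr ⟨?_, fun b hb => ?_⟩⟩
  · exact mem_filter.mpr ⟨ha, fun b hb => hmin b hb⟩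
  rw [mem_filter] at hb
  exact π⁻¹.injective ((hb.2 a ha).antisymm (hmin b hb.1))

theorem card_comesFirstIn_mul_card [Fintype α] {S : Finset α} {a : α} (ha : a ∈ S) :
    #{π : Perm α | π.ComesFirstIn S a} * #S = Fintype.card (Perm α) := by
  calc #{π : Perm α | π.ComesFirstIn S a} * #S
      = ∑ s ∈ S, #{π : Perm α | π.ComesFirstIn S s} := by
        rw [sum_congr rfl fun s hs => card_comesFirstIn_eq hs ha, sum_const, smul_eq_mul, mul_comm]
    _ = ∑ π : Perm α, #{s ∈ S | π.ComesFirstIn S s} := by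
        simp only [card_filter]
        exact sum_comm
    _ = Fintype.card (Perm α) := by
        simp [card_filter_comesFirstIn ⟨a, ha⟩]

theorem comesFirstIn_Icc_iff [LocallyFiniteOrder α] {π : Perm α} {a k : α} (hak : a < k) :
    π.ComesFirstIn (Icc a k) a ↔ π⁻¹ a < π⁻¹ k ∧ ∀ b < k, π⁻¹ b < π⁻¹ a → b < a := by
  constructor
  · intro h
    refine ⟨(h k (right_mem_Icc.mpr hak.le)).lt_of_ne (π⁻¹.injective.ne hak.ne), ?_⟩
    intro b hbk hba
    by_contra! hab
    exact (h b (mem_Icc.mpr ⟨hab, hbk.le⟩)).not_gt hba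
  · rintro ⟨hak', hrec⟩ b hb
    obtain ⟨hab, hbk⟩ := mem_Icc.mp hb
    rcases hbk.lt_or_eq with hbk | rfl
    · by_contra! hba
      exact (hrec b hbk hba).not_ge hab
    · exact hak'.le

end Equiv.Perm

open Equiv.Perm

theorem harm_succ_sub_one (k : ℕ) :
    harm (k + 1) - 1 = ∑ i ∈ range k, 1 / ((k + 1 - i : ℕ) : ℝ) := by
  rw [harm, sum_range_succ', ← sum_range_reflect]
  norm_num only [CharP.cast_eq_zero, zero_add, div_one, add_sub_cancel_right]
  refine sum_congr rfl fun i hi => ?_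
  rw [show k + 1 - i = k - 1 - i + 1 + 1 by grind]
  push_cast
  rfl

variable {n : ℕ}

theorem bstN_eq (k : Fin n) (π : Perm (Fin n)) : bstN n (k + 1) π = π⁻¹ k + 1 := by
  rw [bstN, sum_eq_single (π⁻¹ k)]
  · simp [add_comm]
  · intro i _ hi
    rw [if_neg]
    contrapose! hi
    simp [← Fin.val_inj.mp (Nat.succ_injective hi)]
  · simp

theorem bstRminus_eq_card (k : Fin n) (π : Perm (Fin n)) :
    bstRminus n (k + 1) π = #{a ∈ Iio k | π.ComesFirstIn (Icc a k) a} := by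
  rw [bstRminus, bstN_eq]
  refine card_equiv π fun r => ?_
  simp only [mem_filter, mem_univ, true_and, mem_Iio, add_lt_add_iff_right, Fin.val_fin_lt]
  rw [and_left_comm]
  refine and_congr_right fun hr => ?_
  rw [comesFirstIn_Icc_iff hr]
  simp only [coe_inv, symm_apply_apply]
  refine and_congr_right fun _ => π.forall_congr_left.trans (forall_congr' fun b => ?_)
  simp only [apply_symm_apply]
  exact imp.swap

theorem card_comesFirstIn_Icc (k a : Fin n) (hak : a ≤ k) :
    (#{π : Perm (Fin n) | π.ComesFirstIn (Icc a k) a} : ℝ)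
      = Fintype.card (Perm (Fin n)) / ((k + 1 - a : ℕ) : ℝ) := by
  have hcount := card_comesFirstIn_mul_card (left_mem_Icc.mpr hak)
  rw [Fin.card_Icc] at hcount
  rw [eq_div_iff (by norm_cast; omega), ← hcount]
  push_cast
  rfl

theorem sum_bstRminus (k : Fin n) :
    ∑ π : Perm (Fin n), (bstRminus n (k + 1) π : ℝ)
      = Fintype.card (Perm (Fin n)) * (harm (k + 1) - 1) := by
  have hswap : ∑ π : Perm (Fin n), bstRminus n (k + 1) π
      = ∑ a ∈ Iio k, #{π : Perm (Fin n) | π.ComesFirstIn (Icc a k) a} := by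
    simp only [bstRminus_eq_card, card_filter]
    exact sum_comm
  rw [← Nat.cast_sum, hswap, Nat.cast_sum, harm_succ_sub_one, mul_sum, ← Nat.Iio_eq_range,
    ← Fin.map_valEmbedding_Iio, sum_map]
  refine sum_congr rfl fun a ha => ?_
  rw [card_comesFirstIn_Icc k a (mem_Iio.mp ha).le, mul_one_div]
  rfl

theorem bstN_revPerm_mul (l : ℕ) (π : Perm (Fin n)) :
    bstN n (n + 1 - l) (Fin.revPerm * π) = bstN n l π := by
  unfold bstN
  congr 1
  refine sum_congr rfl fun i _ => ?_
  simp only [Perm.mul_apply, Fin.revPerm_apply, Fin.val_rev]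
  congr 1
  grind

theorem bstRplus_eq_bstRminus_revPerm_mul (l : ℕ) (π : Perm (Fin n)) :
    bstRplus n l π = bstRminus n (n + 1 - l) (Fin.revPerm * π) := by
  unfold bstRplus bstRminus
  rw [bstN_revPerm_mul]
  congr 1
  refine filter_congr fun r _ => ?_
  simp only [Perm.mul_apply, Fin.revPerm_apply, Fin.val_rev, Fin.rev_lt_rev]
  grind

theorem sum_bstRplus (k : Fin n) :
    ∑ π : Perm (Fin n), (bstRplus n (k + 1) π : ℝ)
      = Fintype.card (Perm (Fin n)) * (harm (n - k) - 1) := by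
  have hrev : n + 1 - (k + 1) = Fin.rev k + 1 := by grind
  simp only [bstRplus_eq_bstRminus_revPerm_mul, hrev]
  refine (Equiv.sum_comp (Equiv.mulLeft Fin.revPerm)
    (fun π => (bstRminus n (Fin.rev k + 1) π : ℝ))).trans ?_
  rw [sum_bstRminus]
  grind

instance : DiscreteMeasurableSpace (Perm (Fin n)) := ⟨fun _ => MeasurableSpace.measurableSet_top⟩

theorem bstExp_eq_sum (l : ℕ) :
    bstExp n l = (∑ π, (bstDepth n l π : ℝ)) / Fintype.card (Perm (Fin n)) := by
  simp [bstExp, uniformPerm, PMF.integral_eq_sum, PMF.uniformOfFintype_apply, div_eq_inv_mul,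
    mul_sum]

theorem arora_dent_general (n l : ℕ) (hl : l ∈ Finset.Icc 1 n) :
    bstExp n l = harm l + harm (n + 1 - l) - 2 ∧
      1 + bstExp n l = harm l + harm (n + 1 - l) - 1 := by
  obtain ⟨k, rfl⟩ : ∃ k : Fin n, l = k + 1 := ⟨⟨l - 1, by grind⟩, by grind⟩
  have hexp : bstExp n (k + 1) = harm (k + 1) + harm (n + 1 - (k + 1)) - 2 := by
    have hcard : (Fintype.card (Perm (Fin n)) : ℝ) ≠ 0 := by positivity
    rw [bstExp_eq_sum, Nat.add_sub_add_right]
    simp only [bstDepth, Nat.cast_add, sum_add_distrib, sum_bstRminus, sum_bstRplus]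
    field_simp
    ring
  exact ⟨hexp, by rw [hexp]; ring⟩

theorem arora_dent (n l : ℕ) (hn : 1 ≤ n) (hl : l ∈ Finset.Icc 1 n) :
    bstExp n l = harm l + harm (n + 1 - l) - 2 ∧
      1 + bstExp n l = harm l + harm (n + 1 - l) - 1 :=
  arora_dent_general n l hl
end

section
/- For every c > 0: lim_{λ → ∞} d_TV(Po(λ + c), Po(λ)) = 0. -/
open MeasureTheory ProbabilityTheory Finset Filter
open scoped ENNReal NNReal

/-!
The total variation distance is at most the `ℓ¹` distance of the mass functions, and by
Cauchy–Schwarz this is at most the square root of the `χ²`-divergence. For Poisson laws the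
`χ²`-divergence is explicit, `χ²(Po(a) ‖ Po(b)) = exp ((a - b)² / b) - 1`, because
`p_a(k)² / p_b(k)` is again a term of an exponential series; with `a - b = c` fixed it tends
to `0` as `b → ∞`.
-/

open Topology

section MeasureOnCountable

variable {α : Type*} [MeasurableSpace α] [Countable α] [MeasurableSingletonClass α]
  (μ : Measure α) [IsFiniteMeasure μ]

lemma measureReal_eq_tsum_indicator (s : Set α) :
    μ.real s = ∑' x, s.indicator (fun x => μ.real {x}) x := by
  rw [measureReal_def, ← μ.tsum_indicator_apply_singleton s s.to_countable.measurableSet,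
    ENNReal.tsum_toReal_eq fun x => ?_]
  · congr 1 with x
    by_cases hx : x ∈ s <;> simp [hx, measureReal_def]
  · by_cases hx : x ∈ s <;> simp [hx]

lemma summable_measureReal_singleton : Summable fun x => μ.real {x} := by
  refine ENNReal.summable_toReal ?_
  simpa using (μ.tsum_indicator_apply_singleton Set.univ MeasurableSet.univ).trans_ne
    (measure_ne_top μ _)

end MeasureOnCountable

lemma abs_tsum_indicator_sub_le {ι : Type*} {p q : ι → ℝ} (hp : Summable p) (hq : Summable q)
    (s : Set ι) : |∑' i, s.indicator p i - ∑' i, s.indicator q i| ≤ ∑' i, |p i - q i| := by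
  have hs : Summable fun i => s.indicator p i - s.indicator q i :=
    (hp.indicator s).sub (hq.indicator s)
  rw [← (hp.indicator s).tsum_sub (hq.indicator s)]
  calc |∑' i, (s.indicator p i - s.indicator q i)|
      ≤ ∑' i, |s.indicator p i - s.indicator q i| := by
        simpa only [Real.norm_eq_abs] using norm_tsum_le_tsum_norm (f := fun i =>
          s.indicator p i - s.indicator q i) hs.norm
    _ ≤ ∑' i, |p i - q i| := hs.abs.tsum_le_tsum (fun i => by
          by_cases hi : i ∈ s <;> simp [hi]) (hp.sub hq).abs

lemma dTV_nonneg (μ ν : Measure ℕ) : 0 ≤ dTV μ ν :=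
  Real.iSup_nonneg fun _ => abs_nonneg _

lemma dTV_le_tsum_abs_sub (μ ν : Measure ℕ) [IsFiniteMeasure μ] [IsFiniteMeasure ν] :
    dTV μ ν ≤ ∑' k, |μ.real {k} - ν.real {k}| :=
  ciSup_le fun s => by
    change |μ.real s - ν.real s| ≤ _
    rw [measureReal_eq_tsum_indicator μ, measureReal_eq_tsum_indicator ν]
    exact abs_tsum_indicator_sub_le (summable_measureReal_singleton μ)
        (summable_measureReal_singleton ν) s

lemma tsum_abs_le_sqrt_tsum_sq_div_mul_sqrt_tsum {ι : Type*} {f w : ι → ℝ}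
    (hw : ∀ i, 0 < w i) (hws : Summable w) (hf : Summable fun i => f i ^ 2 / w i) :
    ∑' i, |f i| ≤ √(∑' i, f i ^ 2 / w i) * √(∑' i, w i) := by
  have hF : ∀ i, (|f i| / √(w i)) ^ (2 : ℝ) = f i ^ 2 / w i := fun i => by
    rw [Real.rpow_two, div_pow, sq_abs, Real.sq_sqrt (hw i).le]
  have hG : ∀ i, √(w i) ^ (2 : ℝ) = w i := fun i => by
    rw [Real.rpow_two, Real.sq_sqrt (hw i).le]
  have := Real.inner_le_Lp_mul_Lq_tsum_of_nonneg Real.HolderConjugate.two_two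
    (f := fun i => |f i| / √(w i)) (g := fun i => √(w i))
    (fun i => by positivity) (fun i => by positivity) (by simpa only [hF] using hf)
    (by simpa only [hG] using hws)
  have hFG : ∀ i, |f i| / √(w i) * √(w i) = |f i| := fun i =>
    div_mul_cancel₀ _ (Real.sqrt_ne_zero'.mpr (hw i))
  simp only [hF, hG, hFG] at this
  rwa [Real.sqrt_eq_rpow, Real.sqrt_eq_rpow]

lemma hasSum_poissonMeasure_chiSq (a b : ℝ≥0) (hb : 0 < b) :
    HasSum (fun k => ((poissonMeasure a).real {k} - (poissonMeasure b).real {k}) ^ 2 /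
        (poissonMeasure b).real {k})
      (Real.exp (((a : ℝ) - b) ^ 2 / b) - 1) := by
  have hb' : (0 : ℝ) < b := hb
  have hterm : ∀ k : ℕ, ((poissonMeasure a).real {k} - (poissonMeasure b).real {k}) ^ 2 /
        (poissonMeasure b).real {k} =
      Real.exp (b - 2 * a) * (((a : ℝ) ^ 2 / b) ^ k / k.factorial) -
        2 * (Real.exp (-a) * a ^ k / k.factorial) + Real.exp (-b) * b ^ k / k.factorial := by
    intro k
    simp only [poissonMeasure_real_singleton]
    rw [show Real.exp (b - 2 * a) = Real.exp (-a) ^ 2 / Real.exp (-b) by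
      rw [sq, ← Real.exp_add, ← Real.exp_sub]; ring_nf, div_pow, ← pow_mul]
    field_simp
    ring
  have hexp : HasSum (fun k : ℕ => ((a : ℝ) ^ 2 / b) ^ k / k.factorial)
      (Real.exp ((a : ℝ) ^ 2 / b)) := by
    simpa [← Real.exp_eq_exp_ℝ] using NormedSpace.expSeries_div_hasSum_exp ((a : ℝ) ^ 2 / b)
  have hsum := ((hexp.mul_left (Real.exp (b - 2 * a))).sub
    ((hasSum_one_poissonMeasure a).mul_left 2)).add (hasSum_one_poissonMeasure b)
  have hval : Real.exp (b - 2 * a) * Real.exp ((a : ℝ) ^ 2 / b) - 2 * 1 + 1 =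
      Real.exp (((a : ℝ) - b) ^ 2 / b) - 1 := by
    rw [← Real.exp_add, show (b : ℝ) - 2 * a + a ^ 2 / b = (a - b) ^ 2 / b by field_simp; ring]
    ring
  exact hval ▸ hsum.congr_fun hterm

lemma dTV_poissonMeasure_le (a b : ℝ≥0) (hb : 0 < b) :
    dTV (poissonMeasure a) (poissonMeasure b) ≤ √(Real.exp (((a : ℝ) - b) ^ 2 / b) - 1) := by
  have hchi := hasSum_poissonMeasure_chiSq a b hb
  have hmass : HasSum (fun k => (poissonMeasure b).real {k}) 1 := by
    simpa only [poissonMeasure_real_singleton] using hasSum_one_poissonMeasure b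
  calc dTV (poissonMeasure a) (poissonMeasure b)
      ≤ ∑' k, |(poissonMeasure a).real {k} - (poissonMeasure b).real {k}| :=
        dTV_le_tsum_abs_sub _ _
    _ ≤ √(Real.exp (((a : ℝ) - b) ^ 2 / b) - 1) * √1 := by
        rw [← hchi.tsum_eq, ← hmass.tsum_eq]
        exact tsum_abs_le_sqrt_tsum_sq_div_mul_sqrt_tsum
          (fun k => poissonMeasure_real_singleton_pos k hb) hmass.summable hchi.summable
    _ = √(Real.exp (((a : ℝ) - b) ^ 2 / b) - 1) := by rw [Real.sqrt_one, mul_one]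

theorem dTV_poisson_shift_tendsto_zero_general (c : ℝ≥0) :
    Filter.Tendsto (fun lam : ℝ≥0 =>
        dTV (ProbabilityTheory.poissonMeasure (lam + c))
          (ProbabilityTheory.poissonMeasure lam))
      Filter.atTop (nhds 0) := by
  have hratio : Tendsto (fun lam : ℝ≥0 => (c : ℝ) ^ 2 / lam) atTop (𝓝 0) :=
    tendsto_const_nhds.div_atTop (NNReal.tendsto_coe_atTop.mpr tendsto_id)
  have hsqrt : Tendsto (fun x : ℝ => √(Real.exp x - 1)) (𝓝 0) (𝓝 0) := by
    simpa using ((Real.continuous_exp.sub continuous_const).sqrt.tendsto 0 :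
      Tendsto (fun x : ℝ => √(Real.exp x - 1)) _ _)
  have hbound : Tendsto (fun lam : ℝ≥0 => √(Real.exp ((c : ℝ) ^ 2 / lam) - 1)) atTop (𝓝 0) :=
    hsqrt.comp hratio
  refine squeeze_zero' (Eventually.of_forall fun lam => dTV_nonneg _ _) ?_ hbound
  filter_upwards [eventually_gt_atTop 0] with lam hlam
  simpa using dTV_poissonMeasure_le (lam + c) lam hlam

theorem dTV_poisson_shift_tendsto_zero (c : ℝ≥0) (hc : 0 < c) :
    Filter.Tendsto (fun lam : ℝ≥0 =>
        dTV (ProbabilityTheory.poissonMeasure (lam + c))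
          (ProbabilityTheory.poissonMeasure lam))
      Filter.atTop (nhds 0) :=
  dTV_poisson_shift_tendsto_zero_general c
end

section
/- Let n ≥ 1 and l ∈ {1,…,n}. Let π be a uniformly random permutation of {1,…,n}, set N = π^{-1}(l) and G = #{1 ≤ i < N : π(i) < l}. Then for all integers i, j ≥ 0 with i ≤ l−1, j ≤ n−l and i + j ≤ n−1: P(G = i and N − 1 − G = j) = (1/n) · C(i+j, i) · C(n−1−i−j, l−1−i) / C(n−1, l−1). -/
open MeasureTheory ProbabilityTheory Finset Filter
open scoped ENNReal NNReal

/-!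
Write `l₀ = l - 1` and `p₀ = i + j` for the key and the position of `N`, counted from `0`.
The event is `π p₀ = l₀` together with exactly `i` of the positions before `p₀` carrying values
below `l₀`. Sort these permutations by the sets `B` of positions before `p₀` and `C` of positions
after `p₀` that carry values below `l₀`: `B` ranges over the `i`-subsets of `p₀` positions and `C`
over the `(l₀ - i)`-subsets of the `n - 1 - p₀` others, and each fibre consists of the bijections
that respect the three classes (`< l₀`, `= l₀`, `> l₀`), `l₀! (n - 1 - l₀)!` of them.
Dividing by `n! = n · C(n-1, l₀) · l₀! · (n - 1 - l₀)!` gives the formula.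
-/

open scoped Nat

section
variable {α β ι : Type*} [Fintype α] [Fintype β] [DecidableEq β] [Fintype ι] [DecidableEq ι]

theorem card_equiv_comp_eq (f : α → ι) (g : β → ι)
    (h : ∀ c, Fintype.card {a // f a = c} = Fintype.card {b // g b = c}) :
    Nat.card {e : α ≃ β // g ∘ e = f} = ∏ c, (Fintype.card {b // g b = c})! := by
  -- composing with the inverse of one bijection `e₀` over `f` identifies the bijections over `f`
  -- with the permutations preserving `g`
  set e₀ : α ≃ β := Equiv.ofFiberEquiv fun c => Fintype.equivOfCardEq (h c)
  have he₀ : g ∘ e₀ = f := funext (Equiv.ofFiberEquiv_map _)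
  rw [← DomMulAct.stabilizer_card, ← Nat.card_eq_fintype_card]
  refine Nat.card_congr ((e₀.equivCongr (Equiv.refl β)).subtypeEquiv fun e => ?_)
  rw [← he₀]
  exact (e₀.comp_symm_eq (g := g ∘ e) g).symm

end

section
variable {α β : Type*} [DecidableEq α] [DecidableEq β]

def labelBy (p : α) (A : Finset α) (a : α) : Ordering :=
  if a = p then .eq else if a ∈ A then .lt else .gt

theorem labelBy_comp_equiv_eq_iff {p : α} {q : β} {A : Finset α} {T : Finset β} (hp : p ∉ A)
    (hq : q ∉ T) (e : α ≃ β) :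
    labelBy q T ∘ e = labelBy p A ↔ e p = q ∧ ∀ a, e a ∈ T ↔ a ∈ A := by
  simp only [funext_iff, Function.comp_apply, labelBy]
  constructor
  · intro h
    have hep : e p = q := by simpa using h p
    refine ⟨hep, fun a => ?_⟩
    have ha := h a
    by_cases hap : a = p
    · subst hap; simp [hep, hp, hq]
    · have : e a ≠ q := hep ▸ e.injective.ne hap
      split_ifs at ha <;> simp_all
  · rintro ⟨hep, hT⟩ a
    simp only [← hep, e.apply_eq_iff_eq, hT]

variable [Fintype α] [Fintype β]

theorem card_labelBy_fiber {p : α} {A : Finset α} (hp : p ∉ A) (c : Ordering) :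
    Fintype.card {a // labelBy p A a = c} =
      match c with
      | .lt => #A
      | .eq => 1
      | .gt => Fintype.card α - 1 - #A := by
  rw [Fintype.card_subtype]
  cases c
  · congr 1; ext a; by_cases a = p <;> simp_all [labelBy]
  · simp [labelBy, filter_eq']
  · have : ({a | labelBy p A a = .gt} : Finset α) = (insert p A)ᶜ := by
      ext a; by_cases a = p <;> simp_all [labelBy]
    rw [this, card_compl, card_insert_of_notMem hp]
    dsimp only
    omega

theorem card_equiv_apply_eq_and_preimage_eq {p : α} {q : β} {A : Finset α} {T : Finset β}
    (hp : p ∉ A) (hq : q ∉ T) (hAT : #A = #T) (hαβ : Fintype.card α = Fintype.card β) :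
    #{e : α ≃ β | e p = q ∧ ∀ a, e a ∈ T ↔ a ∈ A} = (#A)! * (Fintype.card α - 1 - #A)! := by
  rw [← Fintype.card_subtype, ← Nat.card_eq_fintype_card]
  simp_rw [← labelBy_comp_equiv_eq_iff hp hq]
  rw [card_equiv_comp_eq _ _ fun c => by
    rw [card_labelBy_fiber hp, card_labelBy_fiber hq, hAT, hαβ]]
  rw [show (univ : Finset Ordering) = {.lt, .eq, .gt} from rfl]
  simp [card_labelBy_fiber hq, hAT, hαβ]

end

theorem card_filter_apply_mem {α β : Type*} [Fintype α] [DecidableEq β] (e : α ≃ β)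
    (S : Finset β) : #{a | e a ∈ S} = #S := by
  rw [← Fintype.card_subtype, ← Fintype.card_coe S]
  exact Fintype.card_congr (e.subtypeEquiv fun _ => Iff.rfl)

theorem inter_union_eq_of_subset_of_disjoint {α : Type*} [DecidableEq α] {s t u : Finset α}
    (ht : t ⊆ s) (hu : Disjoint s u) : s ∩ (t ∪ u) = t := by
  rw [inter_union_distrib_left, inter_eq_right.2 ht, disjoint_iff_inter_eq_empty.1 hu,
    union_empty]

section
variable {α β : Type*} [DecidableEq α] [DecidableEq β] [Fintype α]
  {p : α} {q : β} {L : Finset α} {S : Finset β}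

theorem apply_mem_iff_mem_filter_union (hq : q ∉ S) {e : α ≃ β} (hep : e p = q) (a : α) :
    e a ∈ S ↔ a ∈ {x ∈ L | e x ∈ S} ∪ {x ∈ (insert p L)ᶜ | e x ∈ S} := by
  by_cases hap : a = p
  · subst hap; simp [hep, hq]
  · simp only [mem_union, mem_filter, mem_compl, mem_insert, hap, false_or]
    tauto

theorem card_filter_add_card_filter_compl_insert (hq : q ∉ S) {e : α ≃ β} (hep : e p = q) :
    #{x ∈ L | e x ∈ S} + #{x ∈ (insert p L)ᶜ | e x ∈ S} = #S := by
  have hsplit :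
      ({a | e a ∈ S} : Finset α) = {x ∈ L | e x ∈ S} ∪ {x ∈ (insert p L)ᶜ | e x ∈ S} := by
    ext a
    simp only [mem_filter, mem_univ, true_and, ← apply_mem_iff_mem_filter_union hq hep]
  rw [← card_union_of_disjoint, ← hsplit, card_filter_apply_mem]
  exact disjoint_filter_filter (disjoint_left.2 fun a ha => by simp [ha])

theorem apply_eq_and_filter_eq_and_filter_eq_iff (hq : q ∉ S) {B C : Finset α} (hB : B ⊆ L)
    (hC : C ⊆ (insert p L)ᶜ) (e : α ≃ β) :
    e p = q ∧ {a ∈ L | e a ∈ S} = B ∧ {a ∈ (insert p L)ᶜ | e a ∈ S} = C ↔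
      e p = q ∧ ∀ a, e a ∈ S ↔ a ∈ B ∪ C := by
  have hLR : Disjoint L (insert p L)ᶜ := disjoint_left.2 fun a ha => by simp [ha]
  constructor
  · rintro ⟨hep, rfl, rfl⟩
    exact ⟨hep, apply_mem_iff_mem_filter_union hq hep⟩
  · rintro ⟨hep, hS⟩
    refine ⟨hep, ?_, ?_⟩ <;> simp only [hS, filter_mem_eq_inter]
    · exact inter_union_eq_of_subset_of_disjoint hB (hLR.mono_right hC)
    · rw [union_comm]
      exact inter_union_eq_of_subset_of_disjoint hC (hLR.symm.mono_right hB)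

variable [Fintype β]

theorem card_equiv_apply_eq_and_card_filter_eq (hp : p ∉ L) (hq : q ∉ S)
    (hαβ : Fintype.card α = Fintype.card β) {i : ℕ} (hi : i ≤ #S) :
    #{e : α ≃ β | e p = q ∧ #{a ∈ L | e a ∈ S} = i} =
      (#L).choose i * (Fintype.card α - 1 - #L).choose (#S - i) *
        ((#S)! * (Fintype.card α - 1 - #S)!) := by
  set event : Finset (α ≃ β) := {e | e p = q ∧ #{a ∈ L | e a ∈ S} = i}
  set R := (insert p L)ᶜ
  have hR : #R = Fintype.card α - 1 - #L := by
    rw [card_compl, card_insert_of_notMem hp]; omega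
  have hLR : Disjoint L R := disjoint_left.2 fun a ha => by simp [R, ha]
  -- sort the bijections by which points of `L` and of `R` they send into `S`
  set parts : (α ≃ β) → Finset α × Finset α := fun e => ({a ∈ L | e a ∈ S}, {a ∈ R | e a ∈ S})
  have hmaps : ∀ e ∈ event, parts e ∈ powersetCard i L ×ˢ powersetCard (#S - i) R := by
    intro e he
    simp only [event, mem_filter, mem_univ, true_and] at he
    have : #{a ∈ L | e a ∈ S} + #{a ∈ R | e a ∈ S} = #S :=
      card_filter_add_card_filter_compl_insert hq he.1
    simp only [parts, mem_product, mem_powersetCard]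
    exact ⟨⟨filter_subset _ _, he.2⟩, filter_subset _ _, by omega⟩
  have hfiber : ∀ BC ∈ powersetCard i L ×ˢ powersetCard (#S - i) R,
      #{e ∈ event | parts e = BC} = (#S)! * (Fintype.card α - 1 - #S)! := by
    rintro ⟨B, C⟩ hBC
    simp only [mem_product, mem_powersetCard] at hBC
    obtain ⟨⟨hBL, hB⟩, hCR, hC⟩ := hBC
    have hpBC : p ∉ B ∪ C := by
      simp only [mem_union, not_or]
      exact ⟨fun h => hp (hBL h), fun h => by simpa [R] using hCR h⟩
    have hcardBC : #(B ∪ C) = #S := by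
      rw [card_union_of_disjoint (hLR.mono hBL hCR), hB, hC]; omega
    have hfib : {e ∈ event | parts e = (B, C)} =
        ({e | e p = q ∧ ∀ a, e a ∈ S ↔ a ∈ B ∪ C} : Finset (α ≃ β)) := by
      ext e
      simp only [event, parts, mem_filter, mem_univ, true_and, Prod.mk.injEq,
        ← apply_eq_and_filter_eq_and_filter_eq_iff hq hBL hCR]
      constructor
      · rintro ⟨⟨hep, -⟩, hB', hC'⟩
        exact ⟨hep, hB', hC'⟩
      · rintro ⟨hep, hB', hC'⟩
        exact ⟨⟨hep, hB' ▸ hB⟩, hB', hC'⟩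
    rw [hfib, card_equiv_apply_eq_and_preimage_eq hpBC hq hcardBC hαβ, hcardBC]
  rw [card_eq_sum_card_fiberwise hmaps, sum_congr rfl hfiber, sum_const, card_product,
    card_powersetCard, card_powersetCard, hR, smul_eq_mul]

end

section
variable {n : ℕ}

theorem uniformPerm_apply_toReal (s : Finset (Equiv.Perm (Fin n))) :
    (uniformPerm n s).toReal = #s / (n ! : ℝ) := by
  rw [uniformPerm, PMF.toMeasure_uniformOfFintype_apply _ MeasurableSpace.measurableSet_top,
    ENNReal.toReal_div]
  simp [Fintype.card_perm]

theorem bstN_eq_s18 (l₀ : Fin n) (π : Equiv.Perm (Fin n)) :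
    bstN n (l₀ + 1) π = π.symm l₀ + 1 := by
  have h : ∀ k : Fin n, (π k : ℕ) + 1 = l₀ + 1 ↔ π.symm l₀ = k := by
    intro k; rw [Equiv.symm_apply_eq, eq_comm, ← Fin.val_inj]; omega
  simp only [bstN, h, Fintype.sum_ite_eq]
  omega

theorem bstG_eq (l₀ : Fin n) (π : Equiv.Perm (Fin n)) :
    bstG n (l₀ + 1) π = #{k ∈ Iio (π.symm l₀) | π k ∈ Iio l₀} := by
  simp only [bstG, bstN_eq_s18]
  congr 1; ext k; simp only [mem_filter, mem_univ, true_and, mem_Iio, Fin.lt_def]; omega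

theorem bstG_le (l₀ : Fin n) (π : Equiv.Perm (Fin n)) : bstG n (l₀ + 1) π ≤ π.symm l₀ := by
  rw [bstG_eq, ← Fin.card_Iio]
  exact card_filter_le _ _

theorem bstG_eq_and_sub_eq_iff (l₀ p₀ : Fin n) {i j : ℕ} (hp₀ : (p₀ : ℕ) = i + j)
    (π : Equiv.Perm (Fin n)) :
    bstG n (l₀ + 1) π = i ∧ bstN n (l₀ + 1) π - 1 - bstG n (l₀ + 1) π = j ↔
      π p₀ = l₀ ∧ #{k ∈ Iio p₀ | π k ∈ Iio l₀} = i := by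
  rw [← π.symm_apply_eq.trans eq_comm, bstN_eq_s18]
  constructor
  · rintro ⟨hG, hN⟩
    have hpos : π.symm l₀ = p₀ := Fin.ext (by have := bstG_le l₀ π; omega)
    exact ⟨hpos, by rw [← hpos, ← bstG_eq, hG]⟩
  · rintro ⟨hpos, hcard⟩
    have hG : bstG n (l₀ + 1) π = i := by rw [bstG_eq, hpos, hcard]
    exact ⟨hG, by rw [hG, hpos]; omega⟩

end

theorem joint_distribution_G_N_general (n l : ℕ) (hl : l ∈ Finset.Icc 1 n)
    (i j : ℕ) (hi : i ≤ l - 1) (hij : i + j ≤ n - 1) :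
    ((uniformPerm n) {π | bstG n l π = i ∧ bstN n l π - 1 - bstG n l π = j}).toReal
      = (1 / (n : ℝ)) * (((i + j).choose i : ℝ) * ((n - 1 - i - j).choose (l - 1 - i)))
          / ((n - 1).choose (l - 1)) := by
  rw [Finset.mem_Icc] at hl
  obtain ⟨l₀, rfl⟩ : ∃ l₀ : Fin n, l = l₀ + 1 := ⟨⟨l - 1, by omega⟩, by simp; omega⟩
  rw [← coe_filter_univ, uniformPerm_apply_toReal,
    filter_congr fun π _ => bstG_eq_and_sub_eq_iff l₀ ⟨i + j, by omega⟩ rfl π,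
    card_equiv_apply_eq_and_card_filter_eq notMem_Iio_self notMem_Iio_self rfl
      (by simpa using hi)]
  simp only [Fin.card_Iio, Fintype.card_fin, Nat.add_sub_cancel]
  rw [show n - 1 - i - j = n - 1 - (i + j) by omega]
  have hchoose : ((n - 1).choose l₀ * (l₀ ! * (n - 1 - l₀)!) : ℝ) = (n - 1)! := by
    rw [← mul_assoc]; exact_mod_cast Nat.choose_mul_factorial_mul_factorial (by omega)
  have hfact : (n * (n - 1)! : ℝ) = n ! := by exact_mod_cast Nat.mul_factorial_pred (by omega)
  rw [← hfact, ← hchoose]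
  push_cast
  field_simp

theorem joint_distribution_G_N (n l : ℕ) (hn : 1 ≤ n) (hl : l ∈ Finset.Icc 1 n)
    (i j : ℕ) (hi : i ≤ l - 1) (hj : j ≤ n - l) (hij : i + j ≤ n - 1) :
    ((uniformPerm n) {π | bstG n l π = i ∧ bstN n l π - 1 - bstG n l π = j}).toReal
      = (1 / (n : ℝ)) * (((i + j).choose i : ℝ) * ((n - 1 - i - j).choose (l - 1 - i)))
          / ((n - 1).choose (l - 1)) :=
  joint_distribution_G_N_general n l hl i j hi hij
end
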